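/- Let E : ℕ → ℝ be a sequence of real numbers and for t ∈ ℝ let U_t denote the time-evolution map on ℓ²(ℕ, ℂ) given by (U_t c)ₙ = exp(-i·Eₙ·t)·cₙ. Then for every c ∈ ℓ²(ℕ, ℂ), every t > 0, and every δ > 0, there exists s ≥ 0 such that ‖U_{-t} c - U_s c‖ < δ. That is, backward time evolution applied to any fixed state can be approximated arbitrarily well by forward time evolution. -/

import Mathlib

open scoped ENNReal

/-!
The phase sequences `n ↦ exp(-i Eₙ k t)`, `k ∈ ℕ`, lie in the compact product of unit circles,
so a subsequence converges pointwise. Dominated convergence for series then makes two of the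
states `U_{kt} c` and `U_{mt} c` with `k < m` `δ`-close, and since `U` is a group of isometries,
`‖U_{(m-k)t} c - c‖ < δ`. Finally `U_s c = U_{-t} U_{(m-k)t} c` for `s = (m - k - 1) t ≥ 0`.
-/

/-- The time-evolution map `U_t` on `ℓ²(ℕ, ℂ)`: `(U_t c)ₙ = exp(-i·Eₙ·t)·cₙ`. -/
noncomputable def timeEvol (E : ℕ → ℝ) (t : ℝ) (c : lp (fun _ : ℕ => ℂ) 2) :
    lp (fun _ : ℕ => ℂ) 2 :=
  ⟨fun n => Complex.exp ((-(E n * t) : ℝ) * Complex.I) * (c : ∀ _ : ℕ, ℂ) n, by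
    apply memℓp_gen
    have hs : Summable fun n : ℕ => ‖(c : ∀ _ : ℕ, ℂ) n‖ ^ (2 : ℝ≥0∞).toReal :=
      (lp.memℓp c).summable (by norm_num)
    refine hs.congr fun n => ?_
    simp [norm_mul, Complex.norm_exp]⟩

section lpTwo

variable {ι : Type*} {V : ι → Type*} [∀ i, NormedAddCommGroup (V i)]

theorem lp.norm_sq_eq_tsum (f : lp V 2) : ‖f‖ ^ 2 = ∑' i, ‖f i‖ ^ 2 := by
  simpa using lp.norm_rpow_eq_tsum (p := 2) (by norm_num) f

theorem lp.summable_norm_sq (f : lp V 2) : Summable fun i => ‖f i‖ ^ 2 := by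
  simpa using (lp.memℓp f).summable (p := 2) (by norm_num)

end lpTwo

open Filter Topology

section Recurrence

variable {V : Type*} [NormedAddCommGroup V] [ProperSpace V]

theorem exists_strictMono_tendsto_pi {w : ℕ → ℕ → V} (hw : ∀ k n, ‖w k n‖ ≤ 1) :
    ∃ x : ℕ → V, ∃ φ : ℕ → ℕ, StrictMono φ ∧
      ∀ n, Tendsto (fun j => w (φ j) n) atTop (𝓝 (x n)) := by
  have hK : IsCompact (Set.univ.pi fun _ : ℕ => Metric.closedBall (0 : V) 1) :=
    isCompact_univ_pi fun _ => isCompact_closedBall 0 1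
  obtain ⟨x, -, φ, hφ, hx⟩ := hK.tendsto_subseq (x := w) fun k n _ => by simpa using hw k n
  exact ⟨x, φ, hφ, tendsto_pi_nhds.1 hx⟩

theorem exists_lt_tsum_norm_sub_sq_mul_lt {a : ℕ → ℝ} (ha₀ : ∀ n, 0 ≤ a n) (ha : Summable a)
    {w : ℕ → ℕ → V} (hw : ∀ k n, ‖w k n‖ ≤ 1) {ε : ℝ} (hε : 0 < ε) :
    ∃ k m, k < m ∧ ∑' n, ‖w m n - w k n‖ ^ 2 * a n < ε := by
  obtain ⟨x, φ, hφ, hx⟩ := exists_strictMono_tendsto_pi hw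
  have hbound : ∀ k m n, ‖‖w m n - w k n‖ ^ 2 * a n‖ ≤ 4 * a n := fun k m n => by
    have : ‖w m n - w k n‖ ≤ 2 := (norm_sub_le _ _).trans (by linarith [hw m n, hw k n])
    rw [Real.norm_of_nonneg (mul_nonneg (sq_nonneg _) (ha₀ n))]
    exact mul_le_mul_of_nonneg_right (by nlinarith [norm_nonneg (w m n - w k n)]) (ha₀ n)
  have hlim : Tendsto (fun j => ∑' n, ‖w (φ (j + 1)) n - w (φ j) n‖ ^ 2 * a n) atTop (𝓝 0) := by
    have := tendsto_tsum_of_dominated_convergence (ha.mul_left 4)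
      (fun n => ((((hx n).comp (tendsto_add_atTop_nat 1)).sub (hx n)).norm.pow 2).mul_const (a n))
      (Eventually.of_forall fun j n => hbound _ _ n)
    simpa using this
  obtain ⟨j, hj⟩ := (hlim.eventually (gt_mem_nhds hε)).exists
  exact ⟨φ j, φ (j + 1), hφ j.lt_succ_self, hj⟩

end Recurrence

section timeEvol

variable (E : ℕ → ℝ) (c : lp (fun _ : ℕ => ℂ) 2)

theorem timeEvol_apply (t : ℝ) (n : ℕ) :
    timeEvol E t c n = Complex.exp ((-(E n * t) : ℝ) * Complex.I) * c n := rfl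

theorem timeEvol_add (s t : ℝ) : timeEvol E (s + t) c = timeEvol E s (timeEvol E t c) := by
  ext n
  simp only [timeEvol_apply, ← mul_assoc, ← Complex.exp_add]
  push_cast
  ring_nf

theorem timeEvol_sub (t : ℝ) (d : lp (fun _ : ℕ => ℂ) 2) :
    timeEvol E t (c - d) = timeEvol E t c - timeEvol E t d := by
  ext n
  simp only [timeEvol_apply, lp.coeFn_sub, Pi.sub_apply, mul_sub]

theorem norm_timeEvol (t : ℝ) : ‖timeEvol E t c‖ = ‖c‖ := by
  simp only [lp.norm_eq_tsum_rpow (p := 2) (by norm_num), timeEvol_apply, norm_mul,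
    Complex.norm_exp_ofReal_mul_I, one_mul]

theorem norm_timeEvol_sub_timeEvol_sq (s t : ℝ) :
    ‖timeEvol E s c - timeEvol E t c‖ ^ 2 =
      ∑' n, ‖Complex.exp ((-(E n * s) : ℝ) * Complex.I) -
        Complex.exp ((-(E n * t) : ℝ) * Complex.I)‖ ^ 2 * ‖c n‖ ^ 2 := by
  simp only [lp.norm_sq_eq_tsum, lp.coeFn_sub, Pi.sub_apply, timeEvol_apply, ← sub_mul,
    norm_mul, mul_pow]

theorem exists_pos_norm_timeEvol_nat_mul_sub_lt (τ : ℝ) {δ : ℝ} (hδ : 0 < δ) :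
    ∃ n : ℕ, 0 < n ∧ ‖timeEvol E (n * τ) c - c‖ < δ := by
  obtain ⟨k, m, hkm, hsmall⟩ := exists_lt_tsum_norm_sub_sq_mul_lt (fun n => sq_nonneg ‖c n‖)
    (lp.summable_norm_sq c) (w := fun k n => Complex.exp ((-(E n * (k * τ)) : ℝ) * Complex.I))
    (fun k n => (Complex.norm_exp_ofReal_mul_I _).le) (pow_pos hδ 2)
  refine ⟨m - k, Nat.sub_pos_of_lt hkm, ?_⟩
  have hm : timeEvol E (m * τ) c = timeEvol E (k * τ) (timeEvol E ((m - k : ℕ) * τ) c) := by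
    rw [← timeEvol_add, Nat.cast_sub hkm.le]
    congr 1
    ring
  rw [← norm_timeEvol E _ (k * τ), timeEvol_sub, ← hm]
  exact lt_of_pow_lt_pow_left₀ 2 hδ.le ((norm_timeEvol_sub_timeEvol_sq E c _ _).trans_lt hsmall)

end timeEvol

/-- backward evolution of a fixed state is approximated by forward
evolution. -/
theorem backward_approx_forward (E : ℕ → ℝ) (c : lp (fun _ : ℕ => ℂ) 2) (t δ : ℝ)
    (ht : 0 < t) (hδ : 0 < δ) :
    ∃ s : ℝ, 0 ≤ s ∧ ‖timeEvol E (-t) c - timeEvol E s c‖ < δ := by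
  obtain ⟨n, hn, hrec⟩ := exists_pos_norm_timeEvol_nat_mul_sub_lt E c t hδ
  have hn1 : (1 : ℝ) ≤ n := by exact_mod_cast hn
  refine ⟨(n - 1) * t, by nlinarith, ?_⟩
  have hs : timeEvol E ((n - 1) * t) c = timeEvol E (-t) (timeEvol E (n * t) c) := by
    rw [← timeEvol_add]
    congr 1
    ring
  rwa [hs, ← timeEvol_sub, norm_timeEvol, norm_sub_rev]
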